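/- arXiv:2307.11738 — 2 statements merged into one kernel-verified Lean document; each statement's English description precedes it below -/
import Mathlib

section
/- Let f : [0,1] → ℝ be α-Hölder continuous for some α > 1/2, let F : ℝ → ℝ be C², and suppose F′(f(x₀)) = 0 at some x₀ ∈ [0,1]. Then F ∘ f is differentiable at x₀ with derivative 0. -/
open Filter Set Topology MeasureTheory ProbabilityTheory

/-- The tent function: `2x` on `[0,1/2]`, `2-2x` on `[1/2,1]`, `0` outside `[0,1]`. -/
noncomputable def tent (x : ℝ) : ℝ :=
  if x ≤ 0 ∨ 1 ≤ x then 0 else if x ≤ 1 / 2 then 2 * x else 2 - 2 * x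

/-- The Faber–Schauder system `σ_{n,i}(x) = σ(2^n x - i)`. -/
noncomputable def fs (n i : ℕ) (x : ℝ) : ℝ := tent (2 ^ n * x - i)

/-- `f` is `α`-Hölder at `x₀` from the right (within `[0,1]`):
`limsup_{y ↘ x₀} |f y - f x₀| / |y - x₀|^α < ∞`. -/
def HolderRightAt (f : ℝ → ℝ) (α x₀ : ℝ) : Prop :=
  ∃ C : ℝ, ∀ᶠ y in nhdsWithin x₀ (Set.Ioc x₀ 1), |f y - f x₀| / |y - x₀| ^ α ≤ C

/-- `f` is `α`-Hölder at `x₀` from the left (within `[0,1]`). -/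
def HolderLeftAt (f : ℝ → ℝ) (α x₀ : ℝ) : Prop :=
  ∃ C : ℝ, ∀ᶠ y in nhdsWithin x₀ (Set.Ico 0 x₀), |f y - f x₀| / |y - x₀| ^ α ≤ C

/-- `f` is completely non-Hölder on `[0,1]`: at no point is it one-sided `α`-Hölder
for any `α ∈ (0,1]` (from the right at points `< 1`, from the left at points `> 0`). -/
def CompletelyNonHolder (f : ℝ → ℝ) : Prop :=
  ∀ x₀ ∈ Set.Icc (0 : ℝ) 1, ∀ α ∈ Set.Ioc (0 : ℝ) 1,
    (x₀ < 1 → ¬ HolderRightAt f α x₀) ∧ (0 < x₀ → ¬ HolderLeftAt f α x₀)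

open Asymptotics

/-!
Since `F'` vanishes at `c = f x₀` and is differentiable there, `F' u = O(u - c)`, and the mean
value theorem gives `F b - F c = O((b - c)²)`. Composing with `f y - f x₀ = O(|y - x₀|^α)`
gives `F (f y) - F (f x₀) = O(|y - x₀|^(2α))`, which is `o(y - x₀)` exactly because `2α > 1`.
-/

theorem isBigO_sub_sq_of_deriv_eq_zero {E : Type*} [NormedAddCommGroup E] [NormedSpace ℝ E]
    {F : ℝ → E} {c : ℝ} (hF : ∀ᶠ u in 𝓝 c, DifferentiableAt ℝ F u)
    (hF' : DifferentiableAt ℝ (deriv F) c) (h0 : deriv F c = 0) :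
    (fun b => F b - F c) =O[𝓝 c] fun b => (b - c) ^ 2 := by
  obtain ⟨K, hK0, hK⟩ := hF'.hasDerivAt.isBigO_sub.exists_nonneg
  obtain ⟨δ, hδ, hball⟩ := Metric.eventually_nhds_iff_ball.mp (hF.and hK.bound)
  refine IsBigO.of_bound K (Metric.eventually_nhds_iff_ball.mpr ⟨δ, hδ, fun b hb => ?_⟩)
  have hsub : Metric.closedBall c (dist b c) ⊆ Metric.ball c δ :=
    Metric.closedBall_subset_ball hb
  have hbound : ∀ u ∈ Metric.closedBall c (dist b c), ‖deriv F u‖ ≤ K * dist b c := by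
    intro u hu
    calc ‖deriv F u‖ ≤ K * ‖u - c‖ := by simpa [h0] using (hball u (hsub hu)).2
      _ ≤ K * dist b c := by gcongr; exact hu
  have := (convex_closedBall c (dist b c)).norm_image_sub_le_of_norm_deriv_le
    (fun u hu => (hball u (hsub hu)).1) hbound (Metric.mem_closedBall_self dist_nonneg)
    (Metric.mem_closedBall.mpr le_rfl)
  simpa [Real.dist_eq, sq, mul_assoc] using this

theorem tendsto_abs_sub_rpow_nhds_zero {γ : ℝ} (hγ : 0 < γ) (x₀ : ℝ) :
    Tendsto (fun y => |y - x₀| ^ γ) (𝓝 x₀) (𝓝 0) := by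
  have : ContinuousAt (fun y => |y - x₀| ^ γ) x₀ := by fun_prop (disch := exact hγ.le)
  simpa [Real.zero_rpow hγ.ne'] using this.tendsto

theorem isLittleO_abs_sub_rpow {β : ℝ} (hβ : 1 < β) (x₀ : ℝ) :
    (fun y => |y - x₀| ^ β) =o[𝓝 x₀] fun y => y - x₀ := by
  have hlim := tendsto_abs_sub_rpow_nhds_zero (sub_pos.mpr hβ) x₀
  refine (((isLittleO_one_iff ℝ).mpr hlim).mul_isBigO
    (isBigO_refl (fun y => y - x₀) _).abs_left).congr (fun y => ?_) (fun y => one_mul _)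
  rw [← Real.rpow_add_one' (abs_nonneg _) (by linarith), sub_add_cancel]

theorem isBigO_sub_rpow_of_holder {f : ℝ → ℝ} {s : Set ℝ} {C α x₀ : ℝ}
    (hf : ∀ x ∈ s, ∀ y ∈ s, |f x - f y| ≤ C * |x - y| ^ α) (hx₀ : x₀ ∈ s) :
    (fun y => f y - f x₀) =O[𝓝[s] x₀] fun y => |y - x₀| ^ α :=
  IsBigO.of_bound C <| eventually_nhdsWithin_of_forall fun y hy => by
    simpa [abs_of_nonneg (Real.rpow_nonneg (abs_nonneg _) _)] using hf y hy x₀ hx₀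

/-- if `f` is `α`-Hölder on `[0,1]` for some `α > 1/2`, `F` is `C²` and
`F'(f x₀) = 0` at `x₀ ∈ [0,1]`, then `F ∘ f` is differentiable at `x₀` (within `[0,1]`,
i.e. one-sidedly at the endpoints) with derivative `0`. -/
theorem stmt14 (f F : ℝ → ℝ) (α C : ℝ) (hα : 1 / 2 < α)
    (hHolder : ∀ x ∈ Set.Icc (0 : ℝ) 1, ∀ y ∈ Set.Icc (0 : ℝ) 1,
      |f x - f y| ≤ C * |x - y| ^ α)
    (hF : ContDiff ℝ 2 F) (x₀ : ℝ) (hx₀ : x₀ ∈ Set.Icc (0 : ℝ) 1)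
    (hderiv : deriv F (f x₀) = 0) :
    HasDerivWithinAt (F ∘ f) 0 (Set.Icc 0 1) x₀ := by
  have hf := isBigO_sub_rpow_of_holder hHolder hx₀
  have hf_tendsto : Tendsto f (𝓝[Icc 0 1] x₀) (𝓝 (f x₀)) :=
    tendsto_sub_nhds_zero_iff.mp <| hf.trans_tendsto <|
      (tendsto_abs_sub_rpow_nhds_zero (by linarith) x₀).mono_left nhdsWithin_le_nhds
  have hF_sq : (fun b => F b - F (f x₀)) =O[𝓝 (f x₀)] fun b => (b - f x₀) ^ 2 :=
    isBigO_sub_sq_of_deriv_eq_zero (.of_forall (hF.differentiable two_ne_zero))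
      ((hF.deriv' (n := 1)).differentiable one_ne_zero _) hderiv
  have hFf :
      (fun y => F (f y) - F (f x₀)) =O[𝓝[Icc 0 1] x₀] fun y => |y - x₀| ^ (2 * α) :=
    (hF_sq.comp_tendsto hf_tendsto).trans <| (hf.pow 2).congr_right fun y => by
      rw [← Real.rpow_natCast, ← Real.rpow_mul (abs_nonneg _), mul_comm]; norm_num
  rw [hasDerivWithinAt_iff_isLittleO]
  simpa using hFf.trans_isLittleO <|
    (isLittleO_abs_sub_rpow (by linarith) x₀).mono nhdsWithin_le_nhds
end

section
/- Takagi's function T : [0,1] → ℝ, defined by T(x) = Σ_{n≥0} 2^{−n} Σ_{i=0}^{2ⁿ−1} σ_{n,i}(x), is α-Hölder continuous for every α ∈ (0,1): for each such α there is C with |T(x) − T(y)| ≤ C|x − y|^α for all x, y ∈ [0,1]. -/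
/-!
On `[0,1]` the `n`-th term of Takagi's series is `2⁻ⁿ · 2 dist(2ⁿx, ℤ)`, which is `2`-Lipschitz and
bounded by `2⁻ⁿ`. Cutting the series at `N` gives `|T x - T y| ≤ 2N|x - y| + 4 · 2⁻ᴺ`, and choosing
`2⁻ᴺ ≈ |x - y|` makes both terms `O(|x - y|^α)`, because `N · 2^(-N(1-α))` is bounded.
-/

open Filter Set Topology MeasureTheory ProbabilityTheory

/-- Takagi's function `T(x) = Σ_{n≥0} 2^{-n} Σ_{i=0}^{2ⁿ-1} σ_{n,i}(x)`. -/
noncomputable def takagi (x : ℝ) : ℝ :=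
  ∑' n : ℕ, ((1 : ℝ) / 2) ^ n * ∑ i ∈ Finset.range (2 ^ n), fs n i x


lemma tent_eq_zero {t : ℝ} (h : t ≤ 0 ∨ 1 ≤ t) : tent t = 0 := by
  simp [tent, h]

lemma tent_fract (t : ℝ) : tent (Int.fract t) = 2 * |t - round t| := by
  rw [abs_sub_round_eq_min]
  rcases (Int.fract_nonneg t).eq_or_lt with h0 | h0
  · simp [← h0, tent_eq_zero]
  have h1 := Int.fract_lt_one t
  rw [tent, if_neg (not_or.mpr ⟨not_le.mpr h0, not_le.mpr h1⟩)]
  split_ifs with h2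
  · rw [min_eq_left (by linarith)]
  · rw [min_eq_right (by linarith)]
    ring

/-- Only the tent with `i = ⌊t⌋` is nonzero at `t`; it sees `t` through `Int.fract t`. -/
lemma sum_range_tent_sub {m : ℕ} {t : ℝ} (h0 : 0 ≤ t) (h1 : t ≤ m) :
    ∑ i ∈ Finset.range m, tent (t - i) = 2 * |t - round t| := by
  have hfract : t - ⌊t⌋₊ = Int.fract t := by
    rw [Int.fract, ← Int.natCast_floor_eq_floor h0, Int.cast_natCast]
  have hlo : (⌊t⌋₊ : ℝ) ≤ t := Nat.floor_le h0
  have hhi : t < ⌊t⌋₊ + 1 := Nat.lt_floor_add_one t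
  rw [← tent_fract, ← hfract, Finset.sum_eq_single ⌊t⌋₊]
  · intro i _ hne
    apply tent_eq_zero
    rcases hne.lt_or_gt with h | h
    · right
      have : (i : ℝ) + 1 ≤ ⌊t⌋₊ := by exact_mod_cast h
      linarith
    · left
      have : (⌊t⌋₊ : ℝ) + 1 ≤ i := by exact_mod_cast h
      linarith
  · intro hm
    have : (m : ℝ) ≤ ⌊t⌋₊ := by exact_mod_cast not_lt.mp (Finset.mem_range.not.mp hm)
    exact tent_eq_zero (Or.inl (by linarith))

lemma abs_abs_sub_round_sub_abs_sub_round_le (s t : ℝ) :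
    |(|s - round s| - |t - round t|)| ≤ |s - t| := by
  have key : ∀ a b : ℝ, |a - round a| ≤ |a - b| + |b - round b| := fun a b =>
    calc |a - round a| ≤ |a - (round b : ℤ)| := round_le a (round b)
      _ ≤ |a - b| + |b - round b| := abs_sub_le a b _
  rw [abs_sub_le_iff]
  constructor
  · linarith [key s t]
  · linarith [key t s, abs_sub_comm s t]

/-- `|s - round s|` is the distance from `s` to `ℤ`. -/
noncomputable def takagiTerm (n : ℕ) (x : ℝ) : ℝ :=
  (1 / 2) ^ n * (2 * |2 ^ n * x - round ((2 : ℝ) ^ n * x)|)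

lemma takagi_eq_tsum_takagiTerm {x : ℝ} (hx : x ∈ Icc (0 : ℝ) 1) :
    takagi x = ∑' n, takagiTerm n x := by
  refine tsum_congr fun n => ?_
  have h2 : (0 : ℝ) < 2 ^ n := by positivity
  rw [takagiTerm,
    ← sum_range_tent_sub (m := 2 ^ n) (by nlinarith [hx.1]) (by push_cast; nlinarith [hx.2])]
  rfl

lemma abs_takagiTerm_le (n : ℕ) (x : ℝ) : |takagiTerm n x| ≤ (1 / 2) ^ n := by
  have := abs_sub_round ((2 : ℝ) ^ n * x)
  rw [takagiTerm, abs_of_nonneg (by positivity)]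
  nlinarith [pow_pos (by norm_num : (0 : ℝ) < 1 / 2) n]

lemma abs_takagiTerm_sub_le (n : ℕ) (x y : ℝ) :
    |takagiTerm n x - takagiTerm n y| ≤ 2 * |x - y| :=
  calc |takagiTerm n x - takagiTerm n y|
      = (1 / 2) ^ n * 2 * |(|2 ^ n * x - round ((2 : ℝ) ^ n * x)|
          - |2 ^ n * y - round ((2 : ℝ) ^ n * y)|)| := by
        rw [takagiTerm, takagiTerm, ← mul_sub, ← mul_sub, abs_mul, abs_mul,
          abs_of_pos (by positivity : (0 : ℝ) < (1 / 2) ^ n), abs_two, mul_assoc]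
    _ ≤ (1 / 2) ^ n * 2 * |2 ^ n * x - 2 ^ n * y| :=
        mul_le_mul_of_nonneg_left (abs_abs_sub_round_sub_abs_sub_round_le _ _) (by positivity)
    _ = 2 * |x - y| := by
        rw [← mul_sub, abs_mul, abs_of_pos (by positivity : (0 : ℝ) < 2 ^ n)]
        rw [show ((1 : ℝ) / 2) ^ n * 2 * (2 ^ n * |x - y|) = 2 * ((1 / 2 * 2) ^ n * |x - y|) by
          rw [mul_pow]; ring]
        norm_num

lemma summable_takagiTerm (x : ℝ) : Summable fun n => takagiTerm n x :=
  Summable.of_norm_bounded (summable_geometric_of_lt_one (by norm_num) (by norm_num))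
    (abs_takagiTerm_le · x)

lemma abs_tsum_le_of_abs_le {a : ℕ → ℝ} {L M r : ℝ} (hr0 : 0 ≤ r) (hr1 : r < 1)
    (hL : ∀ n, |a n| ≤ L) (hM : ∀ n, |a n| ≤ M * r ^ n) (N : ℕ) :
    |∑' n, a n| ≤ N * L + M * r ^ N / (1 - r) := by
  have hgeom := summable_geometric_of_lt_one hr0 hr1
  have habs : Summable fun n => |a n| :=
    Summable.of_nonneg_of_le (fun n => abs_nonneg _) hM (hgeom.mul_left M)
  have hhead : ∑ n ∈ Finset.range N, |a n| ≤ N * L := by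
    simpa using Finset.sum_le_sum fun n (_ : n ∈ Finset.range N) => hL n
  have htail : ∑' n, |a (n + N)| ≤ M * r ^ N / (1 - r) :=
    calc ∑' n, |a (n + N)| ≤ ∑' n, M * r ^ N * r ^ n :=
          Summable.tsum_le_tsum (fun n => by rw [mul_assoc, ← pow_add, add_comm]; exact hM _)
            ((summable_nat_add_iff N).mpr habs) (hgeom.mul_left _)
      _ = M * r ^ N / (1 - r) := by rw [tsum_mul_left, tsum_geometric_of_lt_one hr0 hr1]; ring
  calc |∑' n, a n| ≤ ∑' n, |a n| := by
        simpa only [Real.norm_eq_abs] using norm_tsum_le_tsum_norm (f := a) habs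
    _ = ∑ n ∈ Finset.range N, |a n| + ∑' n, |a (n + N)| := (habs.sum_add_tsum_nat_add N).symm
    _ ≤ N * L + M * r ^ N / (1 - r) := add_le_add hhead htail

lemma abs_takagi_sub_le {x y : ℝ} (hx : x ∈ Icc (0 : ℝ) 1) (hy : y ∈ Icc (0 : ℝ) 1)
    (N : ℕ) :
    |takagi x - takagi y| ≤ N * (2 * |x - y|) + 4 * (1 / 2) ^ N := by
  rw [takagi_eq_tsum_takagiTerm hx, takagi_eq_tsum_takagiTerm hy,
    ← (summable_takagiTerm x).tsum_sub (summable_takagiTerm y)]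
  have hbound : ∀ n, |takagiTerm n x - takagiTerm n y| ≤ 2 * (1 / 2) ^ n := fun n =>
    (abs_sub _ _).trans (by linarith [abs_takagiTerm_le n x, abs_takagiTerm_le n y])
  convert abs_tsum_le_of_abs_le (by norm_num) (by norm_num)
    (abs_takagiTerm_sub_le · x y) hbound N using 1
  ring

/-- Take `2⁻ᴺ ≈ d`; then `N d ≤ N 2^(-N(1-α)) d^α` and `N 2^(-N(1-α))` is bounded. -/
lemma exists_nat_mul_le_rpow {α : ℝ} (hα : α < 1) :
    ∃ B, ∀ d ∈ Ioc (0 : ℝ) 1, ∃ N : ℕ, N * d ≤ B * d ^ α ∧ (1 / 2) ^ N ≤ 2 * d := by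
  set q : ℝ := (1 / 2) ^ (1 - α)
  have hq1 : q < 1 := Real.rpow_lt_one (by norm_num) (by norm_num) (by linarith)
  obtain ⟨B, hB⟩ :=
    (tendsto_self_mul_const_pow_of_lt_one (by positivity) hq1).bddAbove_range
  refine ⟨B, fun d ⟨hd0, hd1⟩ => ?_⟩
  obtain ⟨N, hlt, hle⟩ :=
    exists_nat_pow_near_of_lt_one hd0 hd1 (by norm_num : (0 : ℝ) < 1 / 2) (by norm_num)
  refine ⟨N, ?_, by rw [pow_succ] at hlt; linarith⟩
  have hdβ : d ^ (1 - α) ≤ q ^ N := by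
    rw [Real.rpow_pow_comm (by norm_num)]
    exact Real.rpow_le_rpow hd0.le hle (by linarith)
  calc (N : ℝ) * d = N * d ^ (1 - α) * d ^ α := by
        rw [mul_assoc, ← Real.rpow_add hd0, sub_add_cancel, Real.rpow_one]
    _ ≤ N * q ^ N * d ^ α := by gcongr
    _ ≤ B * d ^ α := by gcongr; exact hB ⟨N, rfl⟩

/-- Takagi's function is `α`-Hölder continuous for every `α ∈ (0,1)`. -/
theorem stmt15 :
    ∀ α ∈ Set.Ioo (0 : ℝ) 1, ∃ C : ℝ, ∀ x ∈ Set.Icc (0 : ℝ) 1, ∀ y ∈ Set.Icc (0 : ℝ) 1,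
      |takagi x - takagi y| ≤ C * |x - y| ^ α := by
  rintro α ⟨hα0, hα1⟩
  obtain ⟨B, hB⟩ := exists_nat_mul_le_rpow hα1
  refine ⟨2 * B + 8, fun x hx y hy => ?_⟩
  rcases eq_or_ne x y with rfl | hne
  · simp [Real.zero_rpow hα0.ne']
  have hd : |x - y| ∈ Ioc (0 : ℝ) 1 :=
    ⟨abs_pos.mpr (sub_ne_zero.mpr hne),
      abs_sub_le_iff.mpr ⟨by linarith [hx.2, hy.1], by linarith [hx.1, hy.2]⟩⟩
  obtain ⟨N, hN, hpow⟩ := hB _ hd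
  have hdα : |x - y| ≤ |x - y| ^ α := Real.self_le_rpow_of_le_one hd.1.le hd.2 hα1.le
  linarith [abs_takagi_sub_le hx hy N]
end
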